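/- For n ≥ 2 and k ≥ 1, the number of non-equivalent distinguishing colorings of the path P_n with at most k colors is Φ_k(P_n) = (k^n - k^{⌈n/2⌉})/2. -/

import Mathlib

open Function

section Defs

universe u₁ u₂ u₃

variable {V : Type u₁} {W : Type u₂} {C : Type u₃}

/-- A coloring is distinguishing if only the identity automorphism preserves it. -/
def DistCol (G : SimpleGraph V) (c : V → C) : Prop :=
  ∀ φ : G ≃g G, (∀ x, c (φ x) = c x) → ∀ x, φ x = x

/-- The distinguishing number: the least number of colors admitting a distinguishing coloring. -/
noncomputable def Dnum (G : SimpleGraph V) : ℕ :=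
  sInf {k | ∃ c : V → Fin k, DistCol G c}

/-- The distinguishing threshold: the least `k` such that every `k`-coloring is distinguishing. -/
noncomputable def theta (G : SimpleGraph V) : ℕ :=
  sInf {k | ∀ c : V → Fin k, DistCol G c}

/-- The number of non-equivalent distinguishing colorings with at most `k` colors. -/
noncomputable def Phi (G : SimpleGraph V) (k : ℕ) : ℕ :=
  Nat.card (Quot fun c₁ c₂ : {c : V → Fin k // DistCol G c} =>
    ∃ φ : G ≃g G, ∀ x, c₁.1 x = c₂.1 (φ x))

/-- Rooted version of distinguishing: only automorphisms fixing `v` are considered. -/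
def DistColR (G : SimpleGraph V) (v : V) (c : V → C) : Prop :=
  ∀ φ : G ≃g G, φ v = v → (∀ x, c (φ x) = c x) → ∀ x, φ x = x

noncomputable def DnumR (G : SimpleGraph V) (v : V) : ℕ :=
  sInf {k | ∃ c : V → Fin k, DistColR G v c}

noncomputable def thetaR (G : SimpleGraph V) (v : V) : ℕ :=
  sInf {k | ∀ c : V → Fin k, DistColR G v c}

noncomputable def PhiR (G : SimpleGraph V) (v : V) (k : ℕ) : ℕ :=
  Nat.card (Quot fun c₁ c₂ : {c : V → Fin k // DistColR G v c} =>
    ∃ φ : G ≃g G, φ v = v ∧ ∀ x, c₁.1 x = c₂.1 (φ x))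

/-- A vertex `u` is steady if every automorphism of `G - u` extends to an
automorphism of `G` fixing `u`. -/
def Steady (G : SimpleGraph V) (u : V) : Prop :=
  ∀ ψ : G.induce {w : V | w ≠ u} ≃g G.induce {w : V | w ≠ u},
    ∃ φ : G ≃g G, φ u = u ∧ ∀ w : {w : V | w ≠ u}, φ ↑w = ↑(ψ w)

/-- The vertex-sum of the graphs `G i` (all containing the vertex `u`) at `u`:
`none` is the central vertex obtained by identifying the copies of `u`. -/
def VertexSum {t : ℕ} (G : Fin t → SimpleGraph V) (u : V) :
    SimpleGraph (Option (Fin t × {w : V // w ≠ u})) where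
  Adj x y :=
    (∃ i w, x = none ∧ y = some (i, w) ∧ (G i).Adj u w.1) ∨
    (∃ i w, y = none ∧ x = some (i, w) ∧ (G i).Adj u w.1) ∨
    (∃ i w z, x = some (i, w) ∧ y = some (i, z) ∧ (G i).Adj w.1 z.1)
  symm := by
    constructor
    rintro x y (⟨i, w, hx, hy, h⟩ | ⟨i, w, hy, hx, h⟩ | ⟨i, w, z, hx, hy, h⟩)
    · exact Or.inr (Or.inl ⟨i, w, hx, hy, h⟩)
    · exact Or.inl ⟨i, w, hy, hx, h⟩
    · exact Or.inr (Or.inr ⟨i, z, w, hy, hx, h.symm⟩)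
  loopless := by
    constructor
    rintro x (⟨i, w, hx, hy, h⟩ | ⟨i, w, hy, hx, h⟩ | ⟨i, w, z, hx, hy, h⟩)
    · rw [hx] at hy; cases hy
    · rw [hy] at hx; cases hx
    · rw [hx] at hy
      obtain rfl : w = z := by simpa using hy
      exact h.ne rfl

/-- Disjoint union of the graphs `H i`. -/
def SigmaUnion {t : ℕ} (H : Fin t → SimpleGraph W) : SimpleGraph (Fin t × W) where
  Adj x y := x.1 = y.1 ∧ (H x.1).Adj x.2 y.2
  symm := by
    constructor
    rintro ⟨i, a⟩ ⟨j, b⟩ ⟨rfl, h⟩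
    exact ⟨rfl, h.symm⟩
  loopless := by constructor; rintro x ⟨-, h⟩; exact h.ne rfl

/-- A graph is 2-connected if it has at least 3 vertices and no cut vertex. -/
def TwoConnected (G : SimpleGraph V) [Fintype V] : Prop :=
  3 ≤ Fintype.card V ∧ ∀ x : V, (G.induce {w : V | w ≠ x}).Connected

/-- The smooth rooted product `G_s(H)` where `H` is rooted at `v`. -/
def RootedProd (G : SimpleGraph V) (H : SimpleGraph W) (v : W) :
    SimpleGraph (V × W) where
  Adj x y := (x.1 = y.1 ∧ H.Adj x.2 y.2) ∨ (x.2 = v ∧ y.2 = v ∧ G.Adj x.1 y.1)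
  symm := by
    constructor
    rintro x y (⟨h1, h2⟩ | ⟨h1, h2, h3⟩)
    · exact Or.inl ⟨h1.symm, h2.symm⟩
    · exact Or.inr ⟨h2, h1, h3.symm⟩
  loopless := by constructor; rintro x (⟨-, h⟩ | ⟨-, -, h⟩) <;> exact h.ne rfl

/-- The corona product `G ⊙ H`: the vertex `(g, none)` is the vertex `g` of `G`,
and `(g, some h)` is the vertex `h` in the copy of `H` attached to `g`. -/
def Corona (G : SimpleGraph V) (H : SimpleGraph W) :
    SimpleGraph (V × Option W) where
  Adj x y :=
    (x.2 = none ∧ y.2 = none ∧ G.Adj x.1 y.1) ∨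
    (x.1 = y.1 ∧ ∃ a b, x.2 = some a ∧ y.2 = some b ∧ H.Adj a b) ∨
    (x.1 = y.1 ∧ x.2 = none ∧ ∃ a, y.2 = some a) ∨
    (x.1 = y.1 ∧ y.2 = none ∧ ∃ a, x.2 = some a)
  symm := by
    constructor
    rintro x y (⟨h1, h2, h3⟩ | ⟨h1, a, b, h2, h3, h4⟩ | ⟨h1, h2, h3⟩ | ⟨h1, h2, h3⟩)
    · exact Or.inl ⟨h2, h1, h3.symm⟩
    · exact Or.inr (Or.inl ⟨h1.symm, b, a, h3, h2, h4.symm⟩)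
    · exact Or.inr (Or.inr (Or.inr ⟨h1.symm, h2, h3⟩))
    · exact Or.inr (Or.inr (Or.inl ⟨h1.symm, h2, h3⟩))
  loopless := by
    constructor
    rintro x (⟨-, -, h⟩ | ⟨-, a, b, h2, h3, h4⟩ | ⟨-, h2, a, h3⟩ | ⟨-, h2, a, h3⟩)
    · exact h.ne rfl
    · rw [h2] at h3; exact h4.ne (Option.some.inj h3)
    · rw [h2] at h3; cases h3
    · rw [h2] at h3; cases h3

/-- The lexicographic product `G ∘ H`. -/
def LexProd (G : SimpleGraph V) (H : SimpleGraph W) : SimpleGraph (V × W) where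
  Adj x y := G.Adj x.1 y.1 ∨ (x.1 = y.1 ∧ H.Adj x.2 y.2)
  symm := by
    constructor
    rintro x y (h | ⟨h1, h2⟩)
    exacts [Or.inl h.symm, Or.inr ⟨h1.symm, h2.symm⟩]
  loopless := by constructor; rintro x (h | ⟨-, h⟩) <;> exact h.ne rfl

/-- The number of cycles (orbits, counting fixed points) of a permutation. -/
noncomputable def numCycles (e : Equiv.Perm V) : ℕ :=
  Nat.card (Quot fun x y : V => ∃ n : ℤ, (e ^ n) x = y)

end Defs

/-!
The automorphism group of a graph acts freely on its distinguishing colorings, so each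
equivalence class of them has exactly `|Aut G|` elements. The automorphisms of `P_n` are the
identity and the reversal, so a coloring of `P_n` is distinguishing iff it is not
reversal-invariant; a reversal-invariant coloring is determined by its values on the first
`⌈n/2⌉` vertices, giving `k ^ n - k ^ ⌈n/2⌉` distinguishing colorings in classes of two.
-/

open SimpleGraph

section DistinguishingColorings

variable {V C : Type*} {G : SimpleGraph V} {c : V → C}

/-- The relation in the definition of `Phi`. -/
def IsoEquiv (G : SimpleGraph V) (c₁ c₂ : {c : V → C // DistCol G c}) : Prop :=
  ∃ φ : G ≃g G, ∀ x, c₁.1 x = c₂.1 (φ x)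

lemma isoEquiv_equivalence : Equivalence (IsoEquiv (C := C) G) where
  refl _ := ⟨Iso.refl, fun _ => rfl⟩
  symm := fun ⟨φ, h⟩ => ⟨φ.symm, fun x => by rw [h, φ.apply_symm_apply]⟩
  trans := fun ⟨φ, h⟩ ⟨ψ, h'⟩ => ⟨φ.trans ψ, fun x => by rw [h, h']; rfl⟩

lemma DistCol.comp_iso (hc : DistCol G c) (φ : G ≃g G) : DistCol G (c ∘ φ) := by
  intro ψ hψ x
  have hconj : ∀ y, (φ.symm.trans (ψ.trans φ)) y = y :=
    hc _ fun y => by simpa using hψ (φ.symm y)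
  simpa using hconj (φ x)

lemma DistCol.injective_comp (hc : DistCol G c) : Injective fun φ : G ≃g G => c ∘ φ := by
  intro φ ψ h
  have hquot : ∀ y, (ψ.symm.trans φ) y = y :=
    hc _ fun y => by simpa using congrFun h (ψ.symm y)
  exact RelIso.ext fun x => by simpa using hquot (ψ x)

noncomputable def DistCol.autEquivClass (c : {c : V → C // DistCol G c}) :
    (G ≃g G) ≃ {c' // Quot.mk (IsoEquiv G) c' = Quot.mk (IsoEquiv G) c} :=
  Equiv.ofBijective (fun φ => ⟨⟨c.1 ∘ φ, c.2.comp_iso φ⟩, Quot.sound ⟨φ, fun _ => rfl⟩⟩) <| by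
    refine ⟨fun φ ψ h => c.2.injective_comp congr($h.1.1), fun ⟨c', hc'⟩ => ?_⟩
    obtain ⟨φ, hφ⟩ := isoEquiv_equivalence.eqvGen_iff.1 (Quot.eqvGen_exact hc')
    exact ⟨φ, Subtype.ext (Subtype.ext (funext hφ)).symm⟩

lemma card_quot_isoEquiv_mul_card_aut [Finite V] [Finite C] (G : SimpleGraph V) :
    Nat.card (Quot (IsoEquiv (C := C) G)) * Nat.card (G ≃g G) =
      Nat.card {c : V → C // DistCol G c} := by
  have : Fintype (Quot (IsoEquiv (C := C) G)) := Fintype.ofFinite _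
  have hfiber (q : Quot (IsoEquiv (C := C) G)) :
      Nat.card {c // Quot.mk _ c = q} = Nat.card (G ≃g G) :=
    Quot.inductionOn q fun c => (Nat.card_congr (DistCol.autEquivClass c)).symm
  rw [← Nat.card_congr (Equiv.sigmaFiberEquiv (Quot.mk (IsoEquiv G))), Nat.card_sigma]
  simp only [hfiber, Finset.sum_const, Finset.card_univ, smul_eq_mul, ← Nat.card_eq_fintype_card]

end DistinguishingColorings

namespace Fin

def foldHalf (n : ℕ) (i : Fin n) : Fin ((n + 1) / 2) := ⟨min i (n - 1 - i), by omega⟩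

lemma foldHalf_rev {n : ℕ} (i : Fin n) : foldHalf n i.rev = foldHalf n i := by
  simp only [foldHalf, val_rev, mk.injEq]
  omega

lemma foldHalf_castLE {n : ℕ} (h : (n + 1) / 2 ≤ n) (j : Fin ((n + 1) / 2)) :
    foldHalf n (castLE h j) = j := by
  ext
  simp only [foldHalf, val_castLE]
  omega

lemma castLE_foldHalf {n : ℕ} (h : (n + 1) / 2 ≤ n) (i : Fin n) :
    castLE h (foldHalf n i) = i ∨ castLE h (foldHalf n i) = i.rev := by
  simp only [Fin.ext_iff, foldHalf, val_castLE, val_rev]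
  omega

def revInvariantEquiv (n : ℕ) (C : Type*) :
    {c : Fin n → C // c ∘ rev = c} ≃ (Fin ((n + 1) / 2) → C) where
  toFun c := c.1 ∘ castLE (by omega)
  invFun d := ⟨d ∘ foldHalf n, funext fun i => congrArg d (foldHalf_rev i)⟩
  left_inv c := Subtype.ext <| funext fun i => by
    rcases castLE_foldHalf (by omega) i with h | h
    · simp only [comp_apply, h]
    · simp only [comp_apply, h]
      exact congrFun c.2 i
  right_inv d := funext fun j => congrArg d (foldHalf_castLE _ j)

lemma card_revInvariant {n : ℕ} {C : Type*} [Finite C] :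
    Nat.card {c : Fin n → C // c ∘ rev = c} = Nat.card C ^ ((n + 1) / 2) := by
  rw [Nat.card_congr (revInvariantEquiv n C), Nat.card_fun, Nat.card_fin]

end Fin

namespace SimpleGraph.pathGraph

variable {n : ℕ}

def reverse (n : ℕ) : pathGraph n ≃g pathGraph n where
  toEquiv := Fin.revPerm
  map_rel_iff' := by
    intro a b
    simp only [Fin.revPerm_apply, pathGraph_adj, Fin.val_rev]
    omega

lemma reverse_apply (x : Fin n) : reverse n x = x.rev := rfl

lemma reverse_ne_refl (hn : 2 ≤ n) : reverse n ≠ Iso.refl := by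
  intro h
  have h0 := congr(($h : Fin n → Fin n) ⟨0, by omega⟩)
  simp only [reverse_apply, RelIso.refl_apply, Fin.ext_iff, Fin.val_rev] at h0
  omega

lemma val_apply_succ_or (φ : pathGraph n ≃g pathGraph n) {x y : Fin n} (h : x.val + 1 = y.val) :
    (φ x : ℕ) + 1 = φ y ∨ (φ y : ℕ) + 1 = φ x :=
  pathGraph_adj.1 <| φ.map_adj_iff.2 <| pathGraph_adj.2 <| .inl h

/- Consecutive images differ by `±1` and injectivity forbids turning back, so the images form an
arithmetic progression. -/
lemma val_apply_eq_add_mul (φ : pathGraph n ≃g pathGraph n) (hn : 2 ≤ n) (i : ℕ) (hi : i < n) :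
    ((φ ⟨i, hi⟩ : ℕ) : ℤ) = φ ⟨0, by omega⟩ + i * ((φ ⟨1, hn⟩ : ℤ) - φ ⟨0, by omega⟩) := by
  induction i using Nat.twoStepInduction with
  | zero => simp
  | one => simp
  | more i ih₀ ih₁ =>
    have hne : (φ ⟨i + 2, hi⟩ : ℕ) ≠ φ ⟨i, by omega⟩ :=
      Fin.val_ne_of_ne (φ.injective.ne (by simp [Fin.ext_iff]))
    have hstep : ((φ ⟨i + 2, hi⟩ : ℕ) : ℤ) - φ ⟨i + 1, by omega⟩ =
        (φ ⟨i + 1, by omega⟩ : ℕ) - (φ ⟨i, by omega⟩ : ℕ) := by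
      have := val_apply_succ_or φ (x := ⟨i, by omega⟩) (y := ⟨i + 1, by omega⟩) rfl
      have := val_apply_succ_or φ (x := ⟨i + 1, by omega⟩) (y := ⟨i + 2, hi⟩) rfl
      omega
    have h₀ := ih₀ (by omega)
    have h₁ := ih₁ (by omega)
    push_cast at h₁ ⊢
    linear_combination hstep + 2 * h₁ - h₀

lemma eq_refl_or_eq_reverse (φ : pathGraph n ≃g pathGraph n) : φ = Iso.refl ∨ φ = reverse n := by
  rcases lt_or_ge n 2 with hn | hn
  · exact .inl <| RelIso.ext fun x => Fin.ext (by omega)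
  have hφ := val_apply_eq_add_mul φ hn
  have hlast := hφ (n - 1) (by omega)
  have hlast_lt := (φ ⟨n - 1, by omega⟩).isLt
  rcases val_apply_succ_or φ (x := ⟨0, by omega⟩) (y := ⟨1, hn⟩) rfl with h | h
  · have hd : ((φ ⟨1, hn⟩ : ℕ) : ℤ) - φ ⟨0, by omega⟩ = 1 := by omega
    refine .inl <| RelIso.ext fun x => Fin.ext ?_
    have := hφ x x.isLt
    simp only [Fin.eta] at this
    rw [hd] at this hlast
    rw [RelIso.refl_apply]
    omega
  · have hd : ((φ ⟨1, hn⟩ : ℕ) : ℤ) - φ ⟨0, by omega⟩ = -1 := by omega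
    refine .inr <| RelIso.ext fun x => Fin.ext ?_
    have := hφ x x.isLt
    simp only [Fin.eta] at this
    rw [hd] at this hlast
    rw [reverse_apply, Fin.val_rev]
    omega

lemma distCol_iff {C : Type*} (hn : 2 ≤ n) {c : Fin n → C} :
    DistCol (pathGraph n) c ↔ c ∘ Fin.rev ≠ c := by
  refine ⟨fun hc hrev => reverse_ne_refl hn (RelIso.ext (hc _ (congrFun hrev))), fun hc φ hφ x => ?_⟩
  rcases eq_refl_or_eq_reverse φ with rfl | rfl
  · rfl
  · exact absurd (funext hφ) hc

lemma card_aut (hn : 2 ≤ n) : Nat.card (pathGraph n ≃g pathGraph n) = 2 :=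
  Nat.card_eq_two_iff.2
    ⟨Iso.refl, reverse n, (reverse_ne_refl hn).symm, Set.eq_univ_of_forall eq_refl_or_eq_reverse⟩

lemma card_distCol {C : Type*} [Finite C] (hn : 2 ≤ n) :
    Nat.card {c : Fin n → C // DistCol (pathGraph n) c} =
      Nat.card C ^ n - Nat.card C ^ ((n + 1) / 2) := by
  classical
  have := Fintype.ofFinite C
  rw [Nat.card_congr (Equiv.subtypeEquivRight fun c => distCol_iff hn), ← Fin.card_revInvariant]
  simp only [Nat.card_eq_fintype_card, ne_eq, Fintype.card_subtype_compl, Fintype.card_fun,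
    Fintype.card_fin]

end SimpleGraph.pathGraph

theorem stmt10_general (n k : ℕ) (hn : 2 ≤ n) :
    Phi (SimpleGraph.pathGraph n) k = (k ^ n - k ^ ((n + 1) / 2)) / 2 := by
  have h := card_quot_isoEquiv_mul_card_aut (C := Fin k) (pathGraph n)
  rw [pathGraph.card_aut hn, pathGraph.card_distCol hn, Nat.card_fin] at h
  exact Nat.eq_div_of_mul_eq_left two_ne_zero h

/-- `Φ_k(P_n) = (k^n - k^⌈n/2⌉)/2` for `n ≥ 2`, `k ≥ 1`. -/
theorem stmt10 (n k : ℕ) (hn : 2 ≤ n) (hk : 1 ≤ k) :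
    Phi (SimpleGraph.pathGraph n) k = (k ^ n - k ^ ((n + 1) / 2)) / 2 :=
  stmt10_general n k hn
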